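/- arXiv:2312.11136 — 2 statements merged into one kernel-verified Lean document; each statement's English description precedes it below -/
import Mathlib

section
/- Let X : Ω → 𝒳 have countable range, Z, C, R : Ω → {0,1}, and Y an integrable real random variable. Fix x ∈ 𝒳 and assume: P({X=x} ∩ {Z=z} ∩ {C=c}) > 0 for all z, c ∈ {0,1}; P({X=x} ∩ {Z=0} ∩ {R=1}) > 0; P(C=c | {X=x} ∩ {Z=0}) = P(C=c | {X=x} ∩ {Z=1}) =: π_c for both c; under P(· | {X=x} ∩ {Z=0} ∩ {C=c}) the random variables R and Y are independent for both c (latent missing at random); P(R=1 | {X=x} ∩ {Z=0} ∩ {C=0}) = P(R=1 | {X=x} ∩ {Z=1} ∩ {C=0}) =: ϖ₁₀ (stable noncomplier response); and E[Y | {X=x} ∩ {Z=0} ∩ {C=0}] = E[Y | {X=x} ∩ {Z=1} ∩ {C=0}] =: μ₁₀ (exclusion restriction). Let λ₀ := P(R=1 | {X=x} ∩ {Z=0}) and κ := E[Y | {X=x} ∩ {Z=0} ∩ {R=1}], and assume λ₀ − π₀·ϖ₁₀ > 0. Then E[Y | {X=x} ∩ {Z=0} ∩ {C=1}] = (λ₀·κ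 − π₀·ϖ₁₀·μ₁₀) / (λ₀ − π₀·ϖ₁₀). -/
open MeasureTheory ProbabilityTheory
open scoped Classical

/-- Conditional probability of `A` given `B`: `P(A | B) := P(A ∩ B) / P(B)`. -/
noncomputable def cPr {Ω : Type*} [MeasurableSpace Ω] (P : Measure Ω) (A B : Set Ω) : ℝ :=
  (P (A ∩ B)).toReal / (P B).toReal

/-- Conditional expectation of `W` given event `B`: `E[W | B] := E[W·1_B] / P(B)`. -/
noncomputable def cExp {Ω : Type*} [MeasurableSpace Ω] (P : Measure Ω) (W : Ω → ℝ) (B : Set Ω) : ℝ :=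
  (∫ ω in B, W ω ∂P) / (P B).toReal

/-!
Split the stratum `{X = x} ∩ {Z = 0}` by compliance type `C`. Treatment ignorability, stable
noncomplier response and the exclusion restriction move `π₀`, `ϖ₁₀` and `μ₁₀` into the arm
`Z = 0`, where `π₀ ϖ₁₀` and `π₀ ϖ₁₀ μ₁₀` become the noncompliers' parts of `λ₀` and of `λ₀ κ`,
i.e. of `P(R = 1)` and `E[Y; R = 1]` relative to the stratum. Subtracting leaves the same two
quantities for the compliers, whose ratio is the mean of `Y` over responding compliers; by
latent missing at random this is the complier mean.
-/

lemma preimage_one_eq_compl_preimage_zero {α : Type*} (C : α → Fin 2) :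
    C ⁻¹' {1} = (C ⁻¹' {0})ᶜ := by
  ext ω
  simp only [Set.mem_preimage, Set.mem_singleton_iff, Set.mem_compl_iff]
  generalize C ω = c
  fin_cases c <;> decide

section

variable {Ω : Type*} [MeasurableSpace Ω] {P : Measure Ω}

lemma cPr_def (A B : Set Ω) : cPr P A B = P.real (A ∩ B) / P.real B := rfl

lemma cExp_def (W : Ω → ℝ) (B : Set Ω) : cExp P W B = (∫ ω in B, W ω ∂P) / P.real B := rfl

lemma integral_cond_eq_inv_mul_setIntegral (B : Set Ω) (f : Ω → ℝ) :
    ∫ ω, f ω ∂P[|B] = (P.real B)⁻¹ * ∫ ω in B, f ω ∂P := by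
  rw [ProbabilityTheory.cond, integral_smul_measure, ENNReal.toReal_inv, smul_eq_mul,
    measureReal_def]

/-- The hypothesis on `t` covers the case `P(A ∩ E) = 0`, where the left side is `0`
because `x / 0 = 0`. -/
lemma cPr_mul_div_measureReal_inter [IsFiniteMeasure P] (E A : Set Ω) {t : ℝ}
    (ht : P (A ∩ E) = 0 → t = 0) :
    cPr P E A * (t / P.real (A ∩ E)) = t / P.real A := by
  rw [cPr_def, Set.inter_comm E A]
  by_cases hAE : P.real (A ∩ E) = 0
  · rw [ht ((measureReal_eq_zero_iff).1 hAE)]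
    simp
  have hA : P.real A ≠ 0 := fun hA ↦ hAE (measureReal_mono_null Set.inter_subset_left hA)
  field_simp

lemma measureReal_inter_add_inter_compl_inter [IsFiniteMeasure P] (A S : Set Ω) {N : Set Ω}
    (hN : MeasurableSet N) : P.real (A ∩ N ∩ S) + P.real (A ∩ Nᶜ ∩ S) = P.real (A ∩ S) := by
  rw [Set.inter_right_comm A N, Set.inter_right_comm A Nᶜ, ← Set.sdiff_eq]
  exact measureReal_inter_add_sdiff hN

lemma setIntegral_inter_add_inter_compl_inter (A S : Set Ω) {N : Set Ω} {Y : Ω → ℝ}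
    (hN : MeasurableSet N) (hY : Integrable Y P) :
    ∫ ω in A ∩ N ∩ S, Y ω ∂P + ∫ ω in A ∩ Nᶜ ∩ S, Y ω ∂P = ∫ ω in A ∩ S, Y ω ∂P := by
  rw [Set.inter_right_comm A N, Set.inter_right_comm A Nᶜ, ← Set.sdiff_eq]
  exact integral_inter_add_sdiff hN hY.integrableOn

variable {β : Type*} [MeasurableSpace β] [IsFiniteMeasure P] {R : Ω → β} {Y : Ω → ℝ}
  {B : Set Ω} {s : Set β}

lemma setIntegral_inter_preimage_eq_cPr_mul_of_indepFun (hR : Measurable R)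
    (hY : AEStronglyMeasurable Y P) (hs : MeasurableSet s) (hRY : IndepFun R Y P[|B]) :
    ∫ ω in B ∩ R ⁻¹' s, Y ω ∂P = cPr P (R ⁻¹' s) B * ∫ ω in B, Y ω ∂P := by
  by_cases hPB : P.real B = 0
  · have hPB' := (measureReal_eq_zero_iff).1 hPB
    rw [setIntegral_measure_zero _ hPB',
      setIntegral_measure_zero _ (measure_mono_null Set.inter_subset_left hPB'), mul_zero]
  have h1s : Measurable (s.indicator fun _ ↦ (1 : ℝ)) := measurable_const.indicator hs
  have key := (hRY.comp h1s measurable_id).integral_fun_mul_eq_mul_integral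
    (h1s.comp hR).aestronglyMeasurable (hY.mono_ac cond_absolutelyContinuous)
  have hindY : (fun ω ↦ s.indicator (fun _ ↦ (1 : ℝ)) (R ω) * Y ω) = (R ⁻¹' s).indicator Y := by
    ext ω; by_cases h : R ω ∈ s <;> simp [h]
  have hind1 : (fun ω ↦ s.indicator (fun _ ↦ (1 : ℝ)) (R ω)) = (R ⁻¹' s).indicator 1 := by
    ext ω; by_cases h : R ω ∈ s <;> simp [h]
  simp only [Function.comp_apply, id] at key
  rw [hindY, hind1, integral_cond_eq_inv_mul_setIntegral, integral_cond_eq_inv_mul_setIntegral,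
    integral_cond_eq_inv_mul_setIntegral, setIntegral_indicator (hR hs),
    setIntegral_indicator (hR hs)] at key
  simp only [Pi.one_apply, setIntegral_const, smul_eq_mul, mul_one] at key
  rw [cPr_def, Set.inter_comm (R ⁻¹' s)]
  field_simp at key ⊢
  linear_combination key

lemma cExp_inter_preimage_of_indepFun (hR : Measurable R) (hY : AEStronglyMeasurable Y P)
    (hs : MeasurableSet s) (hRY : IndepFun R Y P[|B]) (hBs : P.real (B ∩ R ⁻¹' s) ≠ 0) :
    cExp P Y (B ∩ R ⁻¹' s) = cExp P Y B := by
  have hB : P.real B ≠ 0 := fun hB ↦ hBs (measureReal_mono_null Set.inter_subset_left hB)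
  rw [cExp_def, setIntegral_inter_preimage_eq_cPr_mul_of_indepFun hR hY hs hRY, cPr_def,
    Set.inter_comm (R ⁻¹' s), cExp_def]
  field_simp

end

theorem stmt13_general {Ω 𝒳 : Type*} [MeasurableSpace Ω]
    (P : Measure Ω) [IsProbabilityMeasure P]
    (X : Ω → 𝒳) (Z C R : Ω → Fin 2) (Y : Ω → ℝ)
    (hC : Measurable C) (hR : Measurable R)
    (hYint : Integrable Y P)
    (x : 𝒳)
    (hTA : ∀ c : Fin 2, cPr P (C ⁻¹' {c}) (X ⁻¹' {x} ∩ Z ⁻¹' {0})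
        = cPr P (C ⁻¹' {c}) (X ⁻¹' {x} ∩ Z ⁻¹' {1}))
    (hLMAR : ∀ c : Fin 2, IndepFun R Y (P[|X ⁻¹' {x} ∩ Z ⁻¹' {0} ∩ C ⁻¹' {c}]))
    (hSNR : cPr P (R ⁻¹' {1}) (X ⁻¹' {x} ∩ Z ⁻¹' {0} ∩ C ⁻¹' {0})
        = cPr P (R ⁻¹' {1}) (X ⁻¹' {x} ∩ Z ⁻¹' {1} ∩ C ⁻¹' {0}))
    (hER : cExp P Y (X ⁻¹' {x} ∩ Z ⁻¹' {0} ∩ C ⁻¹' {0})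
        = cExp P Y (X ⁻¹' {x} ∩ Z ⁻¹' {1} ∩ C ⁻¹' {0}))
    (π₀ w₁₀ μ₁₀ lam₀ κ : ℝ)
    (hπ₀ : π₀ = cPr P (C ⁻¹' {0}) (X ⁻¹' {x} ∩ Z ⁻¹' {1}))
    (hw₁₀ : w₁₀ = cPr P (R ⁻¹' {1}) (X ⁻¹' {x} ∩ Z ⁻¹' {1} ∩ C ⁻¹' {0}))
    (hμ₁₀ : μ₁₀ = cExp P Y (X ⁻¹' {x} ∩ Z ⁻¹' {1} ∩ C ⁻¹' {0}))
    (hlam₀ : lam₀ = cPr P (R ⁻¹' {1}) (X ⁻¹' {x} ∩ Z ⁻¹' {0}))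
    (hκ : κ = cExp P Y (X ⁻¹' {x} ∩ Z ⁻¹' {0} ∩ R ⁻¹' {1}))
    (hden : 0 < lam₀ - π₀ * w₁₀) :
    cExp P Y (X ⁻¹' {x} ∩ Z ⁻¹' {0} ∩ C ⁻¹' {1})
      = (lam₀ * κ - π₀ * w₁₀ * μ₁₀) / (lam₀ - π₀ * w₁₀) := by
  set A := X ⁻¹' {x} ∩ Z ⁻¹' {0}
  set N := C ⁻¹' {0}
  set S := R ⁻¹' {1}
  have hN : MeasurableSet N := hC (measurableSet_singleton 0)
  have hS : MeasurableSet ({1} : Set (Fin 2)) := measurableSet_singleton 1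
  have hY := hYint.aestronglyMeasurable
  have hπ : π₀ = cPr P N A := hπ₀.trans (hTA 0).symm
  have hw : w₁₀ = cPr P S (A ∩ N) := hw₁₀.trans hSNR.symm
  have hμ : μ₁₀ = cExp P Y (A ∩ N) := hμ₁₀.trans hER.symm
  have hlamκ : lam₀ * κ = (∫ ω in A ∩ S, Y ω ∂P) / P.real A := by
    rw [hlam₀, hκ, cExp_def]
    exact cPr_mul_div_measureReal_inter S A (setIntegral_measure_zero _)
  have hπwμ : π₀ * w₁₀ * μ₁₀ = (∫ ω in A ∩ N ∩ S, Y ω ∂P) / P.real A := by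
    rw [hπ, hw, hμ, cExp_def, mul_assoc, ← mul_div_assoc,
      ← setIntegral_inter_preimage_eq_cPr_mul_of_indepFun hR hY hS (hLMAR 0)]
    exact cPr_mul_div_measureReal_inter N A
      fun h ↦ setIntegral_measure_zero _ (measure_mono_null Set.inter_subset_left h)
  have hlam : lam₀ = P.real (A ∩ S) / P.real A := by rw [hlam₀, cPr_def, Set.inter_comm]
  have hπw : π₀ * w₁₀ = P.real (A ∩ N ∩ S) / P.real A := by
    rw [hπ, hw, cPr_def S, Set.inter_comm S]
    exact cPr_mul_div_measureReal_inter N A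
      fun h ↦ (measureReal_eq_zero_iff).2 (measure_mono_null Set.inter_subset_left h)
  have hnum : lam₀ * κ - π₀ * w₁₀ * μ₁₀ = (∫ ω in A ∩ Nᶜ ∩ S, Y ω ∂P) / P.real A := by
    rw [hlamκ, hπwμ, ← setIntegral_inter_add_inter_compl_inter A S hN hYint]
    ring
  have hdenom : lam₀ - π₀ * w₁₀ = P.real (A ∩ Nᶜ ∩ S) / P.real A := by
    rw [hlam, hπw, ← measureReal_inter_add_inter_compl_inter A S hN]
    ring
  obtain ⟨hK, hA⟩ := div_ne_zero_iff.1 (hdenom ▸ hden.ne')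
  rw [hnum, hdenom, div_div_div_cancel_right₀ hA, ← cExp_def, preimage_one_eq_compl_preimage_zero,
    cExp_inter_preimage_of_indepFun hR hY hS (preimage_one_eq_compl_preimage_zero C ▸ hLMAR 1) hK]

/-- Identification of the complier outcome mean under control, combining treatment
assignment ignorability (stratum probabilities equal across arms), LMAR, stable
noncomplier response (SNR) and the exclusion restriction (ER):
`E[Y | {X=x} ∩ {Z=0} ∩ {C=1}] = (λ₀·κ − π₀·ϖ₁₀·μ₁₀)/(λ₀ − π₀·ϖ₁₀)`.
Here `lam₀` is written for `λ₀` and `w₁₀` for `ϖ₁₀`. -/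
theorem stmt13 {Ω 𝒳 : Type*} [MeasurableSpace Ω]
    [Countable 𝒳] [MeasurableSpace 𝒳] [MeasurableSingletonClass 𝒳]
    (P : Measure Ω) [IsProbabilityMeasure P]
    (X : Ω → 𝒳) (Z C R : Ω → Fin 2) (Y : Ω → ℝ)
    (hX : Measurable X) (hZ : Measurable Z) (hC : Measurable C) (hR : Measurable R)
    (hYm : Measurable Y) (hYint : Integrable Y P)
    (x : 𝒳)
    (hpos : ∀ z c : Fin 2, 0 < P (X ⁻¹' {x} ∩ Z ⁻¹' {z} ∩ C ⁻¹' {c}))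
    (hposR : 0 < P (X ⁻¹' {x} ∩ Z ⁻¹' {0} ∩ R ⁻¹' {1}))
    (hTA : ∀ c : Fin 2, cPr P (C ⁻¹' {c}) (X ⁻¹' {x} ∩ Z ⁻¹' {0})
        = cPr P (C ⁻¹' {c}) (X ⁻¹' {x} ∩ Z ⁻¹' {1}))
    (hLMAR : ∀ c : Fin 2, IndepFun R Y (P[|X ⁻¹' {x} ∩ Z ⁻¹' {0} ∩ C ⁻¹' {c}]))
    (hSNR : cPr P (R ⁻¹' {1}) (X ⁻¹' {x} ∩ Z ⁻¹' {0} ∩ C ⁻¹' {0})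
        = cPr P (R ⁻¹' {1}) (X ⁻¹' {x} ∩ Z ⁻¹' {1} ∩ C ⁻¹' {0}))
    (hER : cExp P Y (X ⁻¹' {x} ∩ Z ⁻¹' {0} ∩ C ⁻¹' {0})
        = cExp P Y (X ⁻¹' {x} ∩ Z ⁻¹' {1} ∩ C ⁻¹' {0}))
    (π₀ w₁₀ μ₁₀ lam₀ κ : ℝ)
    (hπ₀ : π₀ = cPr P (C ⁻¹' {0}) (X ⁻¹' {x} ∩ Z ⁻¹' {1}))
    (hw₁₀ : w₁₀ = cPr P (R ⁻¹' {1}) (X ⁻¹' {x} ∩ Z ⁻¹' {1} ∩ C ⁻¹' {0}))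
    (hμ₁₀ : μ₁₀ = cExp P Y (X ⁻¹' {x} ∩ Z ⁻¹' {1} ∩ C ⁻¹' {0}))
    (hlam₀ : lam₀ = cPr P (R ⁻¹' {1}) (X ⁻¹' {x} ∩ Z ⁻¹' {0}))
    (hκ : κ = cExp P Y (X ⁻¹' {x} ∩ Z ⁻¹' {0} ∩ R ⁻¹' {1}))
    (hden : 0 < lam₀ - π₀ * w₁₀) :
    cExp P Y (X ⁻¹' {x} ∩ Z ⁻¹' {0} ∩ C ⁻¹' {1})
      = (lam₀ * κ - π₀ * w₁₀ * μ₁₀) / (lam₀ - π₀ * w₁₀) :=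
  stmt13_general P X Z C R Y hC hR hYint x hTA hLMAR hSNR hER π₀ w₁₀ μ₁₀ lam₀ κ hπ₀ hw₁₀ hμ₁₀ hlam₀
    hκ hden
end

section
/- Let X : Ω → 𝒳 have countable range, Z, C, R : Ω → {0,1}, and Y an integrable real random variable. Fix x ∈ 𝒳 and assume: P({X=x} ∩ {Z=0} ∩ {C=c} ∩ {R=1}) > 0 for both c ∈ {0,1}; under P(· | {X=x} ∩ {Z=0} ∩ {C=c}) the random variables R and Y are independent for both c (latent missing at random); and E[Y | {X=x} ∩ {Z=0} ∩ {C=1}] = E[Y | {X=x} ∩ {Z=0} ∩ {C=0}] (principal ignorability). Then for both c ∈ {0,1}: E[Y | {X=x} ∩ {Z=0} ∩ {C=c}] = E[Y | {X=x} ∩ {Z=0} ∩ {R=1}]. -/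
open MeasureTheory ProbabilityTheory
open scoped Classical

/-!
Within each stratum `{X = x, Z = 0, C = c}`, independence of `R` and `Y` makes the mean of `Y`
among responders `{R = 1}` equal to the stratum mean. By principal ignorability both stratum
means are the same number `m`, so the integral of `Y` over the responders of `{X = x, Z = 0}`,
which is the sum of the two stratum contributions, is `m` times their probability.
-/

section

variable {Ω : Type*} [MeasurableSpace Ω] {P : Measure Ω} {Y : Ω → ℝ}

theorem cExp_eq_integral_cond (B : Set Ω) : cExp P Y B = ∫ ω, Y ω ∂P[|B] := by
  rw [cExp, ProbabilityTheory.cond, integral_smul_measure, ENNReal.toReal_inv, smul_eq_mul,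
    div_eq_inv_mul]

theorem cExp_eq_of_setIntegral_eq_mul {B : Set Ω} {m : ℝ}
    (h : ∫ ω in B, Y ω ∂P = P.real B * m) (hB : P.real B ≠ 0) : cExp P Y B = m := by
  rw [cExp, h, ← measureReal_def, mul_div_cancel_left₀ m hB]

theorem ProbabilityTheory.IndepFun.setIntegral_preimage_eq_mul {β : Type*} [MeasurableSpace β]
    {μ : Measure Ω} {R : Ω → β} (hRY : IndepFun R Y μ) (hR : Measurable R)
    (hY : AEMeasurable Y μ) {s : Set β} (hs : MeasurableSet s) :
    ∫ ω in R ⁻¹' s, Y ω ∂μ = μ.real (R ⁻¹' s) * ∫ ω, Y ω ∂μ :=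
  ((IndepFun_iff_Indep R Y μ).1 hRY).setIntegral_eq_mul (f := id) hR.comap_le hY ⟨s, hs, rfl⟩
    aestronglyMeasurable_id

theorem setIntegral_inter_preimage_eq_mul_cExp [IsFiniteMeasure P] {β : Type*}
    [MeasurableSpace β] {R : Ω → β} {B : Set Ω} {s : Set β} (hB : MeasurableSet B)
    (hB0 : P B ≠ 0) (hR : Measurable R) (hY : AEMeasurable Y P) (hs : MeasurableSet s)
    (hRY : IndepFun R Y P[|B]) :
    ∫ ω in B ∩ R ⁻¹' s, Y ω ∂P = P.real (B ∩ R ⁻¹' s) * cExp P Y B := by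
  have hcond := hRY.setIntegral_preimage_eq_mul hR (hY.mono_ac cond_absolutelyContinuous) hs
  rw [← cExp_eq_integral_cond, measureReal_def, cond_apply hB, ProbabilityTheory.cond,
    Measure.restrict_smul, integral_smul_measure, Measure.restrict_restrict (hR hs),
    Set.inter_comm, ENNReal.toReal_mul, smul_eq_mul, mul_assoc] at hcond
  exact mul_left_cancel₀ (ENNReal.toReal_ne_zero.2
    ⟨ENNReal.inv_ne_zero.2 (measure_ne_top P B), ENNReal.inv_ne_top.2 hB0⟩) hcond

theorem setIntegral_eq_measureReal_mul_of_forall_preimage_singleton [IsFiniteMeasure P]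
    {ι : Type*} [Fintype ι] [MeasurableSpace ι] [MeasurableSingletonClass ι] {C : Ω → ι}
    (hC : Measurable C) {B : Set Ω} (hB : MeasurableSet B) (hY : IntegrableOn Y B P) {m : ℝ}
    (h : ∀ c, ∫ ω in B ∩ C ⁻¹' {c}, Y ω ∂P = P.real (B ∩ C ⁻¹' {c}) * m) :
    ∫ ω in B, Y ω ∂P = P.real B * m := by
  have hmeas : ∀ c, MeasurableSet (B ∩ C ⁻¹' {c}) :=
    fun c ↦ hB.inter (hC (measurableSet_singleton c))
  have hdisj : Pairwise (Function.onFun Disjoint fun c ↦ B ∩ C ⁻¹' {c}) := fun c d hcd ↦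
    ((Set.disjoint_singleton.2 hcd).preimage C).mono Set.inter_subset_right Set.inter_subset_right
  have hunion : B = ⋃ c, B ∩ C ⁻¹' {c} := by
    rw [← Set.inter_iUnion, ← Set.preimage_iUnion, Set.iUnion_of_singleton, Set.preimage_univ,
      Set.inter_univ]
  rw [hunion, integral_iUnion_fintype hmeas hdisj fun c ↦ hY.mono_set Set.inter_subset_left,
    measureReal_iUnion_fintype hdisj hmeas, Finset.sum_mul]
  exact Finset.sum_congr rfl fun c _ ↦ h c

end

theorem stmt18_general {Ω 𝒳 : Type*} [MeasurableSpace Ω]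
    [MeasurableSpace 𝒳] [MeasurableSingletonClass 𝒳]
    (P : Measure Ω) [IsProbabilityMeasure P]
    (X : Ω → 𝒳) (Z C R : Ω → Fin 2) (Y : Ω → ℝ)
    (hX : Measurable X) (hZ : Measurable Z) (hC : Measurable C) (hR : Measurable R)
    (hYint : Integrable Y P)
    (x : 𝒳)
    (hpos : ∀ c : Fin 2, 0 < P (X ⁻¹' {x} ∩ Z ⁻¹' {0} ∩ C ⁻¹' {c} ∩ R ⁻¹' {1}))
    (hLMAR : ∀ c : Fin 2, IndepFun R Y (P[|X ⁻¹' {x} ∩ Z ⁻¹' {0} ∩ C ⁻¹' {c}]))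
    (hPI : cExp P Y (X ⁻¹' {x} ∩ Z ⁻¹' {0} ∩ C ⁻¹' {1})
        = cExp P Y (X ⁻¹' {x} ∩ Z ⁻¹' {0} ∩ C ⁻¹' {0})) :
    ∀ c : Fin 2,
      cExp P Y (X ⁻¹' {x} ∩ Z ⁻¹' {0} ∩ C ⁻¹' {c})
        = cExp P Y (X ⁻¹' {x} ∩ Z ⁻¹' {0} ∩ R ⁻¹' {1}) := by
  set W := X ⁻¹' {x} ∩ Z ⁻¹' {0}
  set S := R ⁻¹' {1}
  have hW : MeasurableSet W :=
    (hX (measurableSet_singleton x)).inter (hZ (measurableSet_singleton 0))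
  have hmean : ∀ c : Fin 2, cExp P Y (W ∩ C ⁻¹' {c}) = cExp P Y (W ∩ C ⁻¹' {0}) := by
    intro c
    fin_cases c
    · rfl
    · exact hPI
  have hstratum : ∀ c : Fin 2, ∫ ω in W ∩ S ∩ C ⁻¹' {c}, Y ω ∂P
      = P.real (W ∩ S ∩ C ⁻¹' {c}) * cExp P Y (W ∩ C ⁻¹' {0}) := by
    intro c
    rw [Set.inter_right_comm, ← hmean c]
    exact setIntegral_inter_preimage_eq_mul_cExp (hW.inter (hC (measurableSet_singleton c)))
      ((hpos c).trans_le (measure_mono Set.inter_subset_left)).ne' hR hYint.aemeasurable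
      (measurableSet_singleton 1) (hLMAR c)
  have hpooled := setIntegral_eq_measureReal_mul_of_forall_preimage_singleton hC
    (hW.inter (hR (measurableSet_singleton 1))) hYint.integrableOn hstratum
  have hresponders : P.real (W ∩ S) ≠ 0 :=
    (ENNReal.toReal_pos ((hpos 0).trans_le (measure_mono
      (Set.inter_right_comm W _ S ▸ Set.inter_subset_left))).ne' (measure_ne_top P _)).ne'
  intro c
  rw [hmean c, cExp_eq_of_setIntegral_eq_mul hpooled hresponders]

/-- Under LMAR and principal ignorability (PI, stated as equality of the stratum-specific
conditional outcome means under control), both stratum-specific outcome means under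
control are identified by the mean among control-arm responders. -/
theorem stmt18 {Ω 𝒳 : Type*} [MeasurableSpace Ω]
    [Countable 𝒳] [MeasurableSpace 𝒳] [MeasurableSingletonClass 𝒳]
    (P : Measure Ω) [IsProbabilityMeasure P]
    (X : Ω → 𝒳) (Z C R : Ω → Fin 2) (Y : Ω → ℝ)
    (hX : Measurable X) (hZ : Measurable Z) (hC : Measurable C) (hR : Measurable R)
    (hYm : Measurable Y) (hYint : Integrable Y P)
    (x : 𝒳)
    (hpos : ∀ c : Fin 2, 0 < P (X ⁻¹' {x} ∩ Z ⁻¹' {0} ∩ C ⁻¹' {c} ∩ R ⁻¹' {1}))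
    (hLMAR : ∀ c : Fin 2, IndepFun R Y (P[|X ⁻¹' {x} ∩ Z ⁻¹' {0} ∩ C ⁻¹' {c}]))
    (hPI : cExp P Y (X ⁻¹' {x} ∩ Z ⁻¹' {0} ∩ C ⁻¹' {1})
        = cExp P Y (X ⁻¹' {x} ∩ Z ⁻¹' {0} ∩ C ⁻¹' {0})) :
    ∀ c : Fin 2,
      cExp P Y (X ⁻¹' {x} ∩ Z ⁻¹' {0} ∩ C ⁻¹' {c})
        = cExp P Y (X ⁻¹' {x} ∩ Z ⁻¹' {0} ∩ R ⁻¹' {1}) :=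
  stmt18_general P X Z C R Y hX hZ hC hR hYint x hpos hLMAR hPI
end
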